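/- With the notation of the context, for every odd k ∈ {1, …, n−1} one has u_k = (u/2)·F_k( (u_1 + u_{n−1})/u ) + D·A(u)·P_k( (u_1 − u_{n−1})/(2·D·A(u)) ), and u_{n−k} = (u/2)·F_k( (u_1 + u_{n−1})/u ) − D·A(u)·P_k( (u_1 − u_{n−1})/(2·D·A(u)) ). -/

import Mathlib

open Polynomial

/-- `F_m(Z) = 2 T_m(Z/2)` over ℂ, where `T_m` is the Chebyshev polynomial of the first kind. -/
noncomputable def Fc (m : ℤ) : ℂ[X] :=
  2 * (Polynomial.Chebyshev.T ℂ m).comp (C (1 / 2 : ℂ) * X)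

/-- The polynomial `A = (F_{n-1}(Z/√D) - dZ/D)/(2R)` (with `D = d² - R`), realized over ℂ
via a choice `sd` of a square root of `D`. -/
noncomputable def Apoly (n : ℕ) (d R : ℚ) (sd : ℂ) : ℂ[X] :=
  ((Fc ((n : ℤ) - 1)).comp (C sd⁻¹ * X) - C ((d : ℂ) / ((d : ℂ) ^ 2 - (R : ℂ))) * X)
    * C (1 / (2 * (R : ℂ)))

/-- For odd `k`, the polynomial `P_k = i√R·(-1)^{(k-1)/2}·F_k(Z/(i√R))`, which has rational
coefficients; realized over ℂ via the chosen square root `sqrtR` of `R`. -/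
noncomputable def Ppoly (sqrtR : ℂ) (k : ℕ) : ℂ[X] :=
  C (Complex.I * sqrtR * (-1 : ℂ) ^ ((k - 1) / 2)) *
    (Fc (k : ℤ)).comp (C (Complex.I * sqrtR)⁻¹ * X)


/-! At `w = ζ` the roots satisfy `u_1 + u_{n-1} = u(ζ + ζ⁻¹)` and
`u_1 - u_{n-1} = 2DA(u)·√R(ζ - ζ⁻¹)`, since `ζ^{n-1} = ζ⁻¹`. The rescaled Chebyshev polynomials
satisfy `F_k(x + x⁻¹) = x^k + x⁻ᵏ`, and for odd `k` the substitution `Z ↦ Z/(i√R)` turns this into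
`P_k(√R(x - x⁻¹)) = √R(x^k - x⁻ᵏ)`. Feeding the two arguments into `F_k` and `P_k` therefore
recovers the two halves of `u_k`, and of `u_{n-k}` since `ζ^{n-k} = ζ⁻ᵏ`. -/

theorem Polynomial.Chebyshev.C_eval_add_of_mul_eq_one {R : Type*} [CommRing R] {x y : R}
    (hxy : x * y = 1) (n : ℕ) : (Chebyshev.C R n).eval (x + y) = x ^ n + y ^ n := by
  induction n using Nat.twoStepInduction with
  | zero => norm_num
  | one => simp [Chebyshev.C_one]
  | more n ih₀ ih₁ =>
    push_cast at ih₁ ⊢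
    simp only [Chebyshev.C_add_two, eval_sub, eval_mul, eval_X, ih₀, ih₁]
    linear_combination (x ^ n + y ^ n) * hxy

theorem Fc_eq_chebyshevC (m : ℤ) : Fc m = Chebyshev.C ℂ m := by
  rw [Chebyshev.C_eq_two_mul_T_comp_half_mul_X, Fc, invOf_eq_inv, one_div]

theorem Fc_eval_add_inv {x : ℂ} (hx : x ≠ 0) (k : ℕ) :
    (Fc k).eval (x + x⁻¹) = x ^ k + (x ^ k)⁻¹ := by
  rw [Fc_eq_chebyshevC, Chebyshev.C_eval_add_of_mul_eq_one (mul_inv_cancel₀ hx), inv_pow]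

theorem Ppoly_eval_mul_sub_inv (s : ℂ) {x : ℂ} (hx : x ≠ 0) {k : ℕ} (hk : Odd k) :
    (Ppoly s k).eval (s * (x - x⁻¹)) = s * (x ^ k - (x ^ k)⁻¹) := by
  rcases eq_or_ne s 0 with rfl | hs
  · simp [Ppoly]
  obtain ⟨m, rfl⟩ := hk
  -- `P_{2m+1}(s(x - x⁻¹)) = is(-1)^m F_{2m+1}(-ix + ix⁻¹)`, and `(-ix)(ix⁻¹) = 1`
  have hprod : (-Complex.I * x) * (Complex.I * x⁻¹) = 1 := by
    field_simp
    linear_combination -Complex.I_sq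
  have harg : (Complex.I * s)⁻¹ * (s * (x - x⁻¹)) = -Complex.I * x + Complex.I * x⁻¹ := by
    field_simp
    linear_combination (x ^ 2 - 1) * Complex.I_sq
  have hI : Complex.I ^ (2 * m + 1) = (-1) ^ m * Complex.I := by
    rw [pow_succ, pow_mul, Complex.I_sq]
  have hnegI : (-Complex.I) ^ (2 * m + 1) = -((-1) ^ m * Complex.I) := by
    rw [neg_pow, hI, (odd_two_mul_add_one m).neg_one_pow, neg_one_mul]
  have hsign : ((-1 : ℂ) ^ m) ^ 2 = 1 := by
    rw [← pow_mul, mul_comm, pow_mul, neg_one_sq, one_pow]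
  simp only [Ppoly, eval_mul, eval_comp, eval_C, eval_X, harg, Fc_eq_chebyshevC,
    Chebyshev.C_eval_add_of_mul_eq_one hprod, Nat.add_sub_cancel,
    Nat.mul_div_cancel_left m two_pos, mul_pow, hI, hnegI, inv_pow]
  linear_combination s * ((-1 : ℂ) ^ m) ^ 2 * ((x ^ (2 * m + 1))⁻¹ - x ^ (2 * m + 1)) *
    Complex.I_sq + s * (x ^ (2 * m + 1) - (x ^ (2 * m + 1))⁻¹) * hsign

/-- The shape `u/2·(w + w⁻¹) + c·s·(w - w⁻¹)` of the roots `u_k`, at `w = ζ^k`,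
`c = D·A(u)`, `s = √R`. -/
noncomputable def rootFormula (u c s w : ℂ) : ℂ :=
  u / 2 * (w + w⁻¹) + c * s * (w - w⁻¹)

theorem rootFormula_add_rootFormula_inv (u c s w : ℂ) :
    rootFormula u c s w + rootFormula u c s w⁻¹ = u * (w + w⁻¹) := by
  simp only [rootFormula, inv_inv]
  ring

theorem rootFormula_sub_rootFormula_inv (u c s w : ℂ) :
    rootFormula u c s w - rootFormula u c s w⁻¹ = 2 * c * (s * (w - w⁻¹)) := by
  simp only [rootFormula, inv_inv]
  ring

theorem rootFormula_pow_of_odd (u c s : ℂ) {w : ℂ} (hw : w ≠ 0) {k : ℕ} (hk : Odd k) :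
    rootFormula u c s (w ^ k) =
        u / 2 * (Fc k).eval ((rootFormula u c s w + rootFormula u c s w⁻¹) / u) +
          c * (Ppoly s k).eval ((rootFormula u c s w - rootFormula u c s w⁻¹) / (2 * c)) ∧
      rootFormula u c s (w ^ k)⁻¹ =
        u / 2 * (Fc k).eval ((rootFormula u c s w + rootFormula u c s w⁻¹) / u) -
          c * (Ppoly s k).eval ((rootFormula u c s w - rootFormula u c s w⁻¹) / (2 * c)) := by
  -- `x / 0 = 0` is harmless: for `u = 0` (resp. `c = 0`) both sides of `hF` (resp. `hP`) vanish.
  have hF : u / 2 * (Fc k).eval ((rootFormula u c s w + rootFormula u c s w⁻¹) / u) =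
      u / 2 * (w ^ k + (w ^ k)⁻¹) := by
    rcases eq_or_ne u 0 with rfl | hu
    · simp
    rw [rootFormula_add_rootFormula_inv, mul_div_cancel_left₀ _ hu, Fc_eval_add_inv hw]
  have hP : c * (Ppoly s k).eval ((rootFormula u c s w - rootFormula u c s w⁻¹) / (2 * c)) =
      c * s * (w ^ k - (w ^ k)⁻¹) := by
    rcases eq_or_ne c 0 with rfl | hc
    · simp
    rw [rootFormula_sub_rootFormula_inv, mul_div_cancel_left₀ _ (mul_ne_zero two_ne_zero hc),
      Ppoly_eval_mul_sub_inv s hw hk, mul_assoc]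
  rw [hF, hP]
  exact ⟨rfl, by simp only [rootFormula, inv_inv]; ring⟩

theorem deMoivre_roots_in_terms_of_three_general
    (n : ℕ) (d R : ℚ) (sqrtR : ℂ) (sd : ℂ) (u : ℂ)
    (ζ : ℂ) (hζ : IsPrimitiveRoot ζ n)
    (u_ : ℕ → ℂ)
    (hu_formula : ∀ k, u_ k =
      u / 2 * (ζ ^ k + (ζ ^ k)⁻¹) +
        ((d : ℂ) ^ 2 - (R : ℂ)) * (Apoly n d R sd).eval u * sqrtR * (ζ ^ k - (ζ ^ k)⁻¹)) :
    ∀ k, 1 ≤ k → k ≤ n - 1 → Odd k →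
      u_ k =
        u / 2 * (Fc (k : ℤ)).eval ((u_ 1 + u_ (n - 1)) / u) +
          ((d : ℂ) ^ 2 - (R : ℂ)) * (Apoly n d R sd).eval u *
            (Ppoly sqrtR k).eval
              ((u_ 1 - u_ (n - 1)) /
                (2 * ((d : ℂ) ^ 2 - (R : ℂ)) * (Apoly n d R sd).eval u)) ∧
      u_ (n - k) =
        u / 2 * (Fc (k : ℤ)).eval ((u_ 1 + u_ (n - 1)) / u) -
          ((d : ℂ) ^ 2 - (R : ℂ)) * (Apoly n d R sd).eval u *
            (Ppoly sqrtR k).eval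
              ((u_ 1 - u_ (n - 1)) /
                (2 * ((d : ℂ) ^ 2 - (R : ℂ)) * (Apoly n d R sd).eval u)) := by
  intro k hk₁ hkn hk
  have hζ₀ : ζ ≠ 0 := hζ.ne_zero (by omega)
  have hpow_sub : ∀ j ≤ n, ζ ^ (n - j) = (ζ ^ j)⁻¹ := fun j hj => by
    rw [pow_sub₀ ζ hζ₀ hj, hζ.pow_eq_one, one_mul]
  have hroot : ∀ j, u_ j = rootFormula u _ sqrtR (ζ ^ j) := hu_formula
  rw [hroot 1, hroot (n - 1), hroot k, hroot (n - k), hpow_sub 1 (by omega),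
    hpow_sub k (by omega), pow_one, mul_assoc 2]
  exact rootFormula_pow_of_odd u _ sqrtR hζ₀ hk

/-- **Theorem 3.**  All roots `u_k` of `f_n = f_n(Z,d,R)` are expressed in terms of the three
roots `u = u_0`, `u_1`, `u_{n-1}`: for every odd `k ∈ {1, …, n-1}`,
`u_k = (u/2)·F_k((u_1+u_{n-1})/u) + D·A(u)·P_k((u_1-u_{n-1})/(2DA(u)))`, and `u_{n-k}` is
obtained by replacing the middle plus sign by a minus sign. -/
theorem deMoivre_roots_in_terms_of_three
    (n : ℕ) (hn3 : 3 ≤ n) (hodd : Odd n)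
    (d R : ℚ) (hd : d ≠ 0) (hR : ¬ IsSquare R)
    (sqrtR : ℂ) (hsR : sqrtR ^ 2 = (R : ℂ))
    (sd : ℂ) (hsd : sd ^ 2 = (d : ℂ) ^ 2 - (R : ℂ))
    (y y' : ℂ) (hy : y ^ n = (d : ℂ) + sqrtR) (hy' : y' ^ n = (d : ℂ) - sqrtR)
    (z u : ℂ) (hz : z = y * y') (hu : u = z ^ ((n - 1) / 2) * (y + y'))
    (ζ : ℂ) (hζ : IsPrimitiveRoot ζ n)
    (u_ : ℕ → ℂ)
    (hu_val : ∀ k, u_ k = z ^ ((n - 1) / 2) * (y * ζ ^ k + y' * (ζ ^ k)⁻¹))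
    (hu_formula : ∀ k, u_ k =
      u / 2 * (ζ ^ k + (ζ ^ k)⁻¹) +
        ((d : ℂ) ^ 2 - (R : ℂ)) * (Apoly n d R sd).eval u * sqrtR * (ζ ^ k - (ζ ^ k)⁻¹))
    (hune : u ≠ 0) (hAu : (Apoly n d R sd).eval u ≠ 0) :
    ∀ k, 1 ≤ k → k ≤ n - 1 → Odd k →
      u_ k =
        u / 2 * (Fc (k : ℤ)).eval ((u_ 1 + u_ (n - 1)) / u) +
          ((d : ℂ) ^ 2 - (R : ℂ)) * (Apoly n d R sd).eval u *
            (Ppoly sqrtR k).eval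
              ((u_ 1 - u_ (n - 1)) /
                (2 * ((d : ℂ) ^ 2 - (R : ℂ)) * (Apoly n d R sd).eval u)) ∧
      u_ (n - k) =
        u / 2 * (Fc (k : ℤ)).eval ((u_ 1 + u_ (n - 1)) / u) -
          ((d : ℂ) ^ 2 - (R : ℂ)) * (Apoly n d R sd).eval u *
            (Ppoly sqrtR k).eval
              ((u_ 1 - u_ (n - 1)) /
                (2 * ((d : ℂ) ^ 2 - (R : ℂ)) * (Apoly n d R sd).eval u)) :=
  deMoivre_roots_in_terms_of_three_general n d R sqrtR sd u ζ hζ u_ hu_formula
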